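/- For every positive integer n, log p^(j)_n ~ j log j as j → ∞. -/

import Mathlib

/-!
Write `L j = log p^(j)_n`. Chebyshev's bounds on `π` give `log p_m = log m + log log m + O(1)`,
so `L (j + 1) = L j + log (L j) + O(1)`. Comparing `L` with `j / 2` and with a multiple of
`j log j` shows `log (L j) ~ log j`; hence the increments of `L` are asymptotic to those of
`j log j`, and Stolz–Cesàro gives `L j ~ j log j`.
-/

open Filter Topology

/-- `pseq n` is the `n`-th prime number, with `pseq 1 = 2`. -/
noncomputable def pseq (n : ℕ) : ℕ := Nat.nth Nat.Prime (n - 1)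

/-- `pk k n = p^(k)_n`: the `k`-fold iterate of `n ↦ p_n` applied to `n`. -/
noncomputable def pk (k n : ℕ) : ℕ := pseq^[k] n

open Real Asymptotics
open scoped Nat.Prime

lemma log_le_half_self {t : ℝ} (ht : 0 < t) : log t ≤ t / 2 := by
  have h := log_le_sub_one_of_pos (half_pos ht)
  rw [log_div ht.ne' two_ne_zero] at h
  linarith [log_two_lt_d9]

lemma log_le_add_one_mul_log_add_one_sub_mul_log {x : ℝ} (hx : 0 ≤ x) :
    log x ≤ (x + 1) * log (x + 1) - x * log x := by
  rcases hx.eq_or_lt with rfl | hx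
  · simp
  have h := log_le_log hx (lt_add_one x).le
  nlinarith [log_nonneg (by linarith : (1:ℝ) ≤ x + 1)]

lemma add_one_mul_log_add_one_sub_mul_log_le {x : ℝ} (hx : 1 ≤ x) :
    (x + 1) * log (x + 1) - x * log x ≤ log x + 2 := by
  have hx0 : 0 < x := by linarith
  have h : log (x + 1) - log x ≤ 1 / x := by
    rw [← log_div (by linarith) hx0.ne']
    have := log_le_sub_one_of_pos (show 0 < (x + 1) / x by positivity)
    have hq : (x + 1) / x - 1 = 1 / x := by field_simp; ring
    linarith
  have h' : (x + 1) * (log (x + 1) - log x) ≤ 2 := by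
    calc (x + 1) * (log (x + 1) - log x) ≤ (x + 1) * (1 / x) := by gcongr
      _ = 1 + 1 / x := by field_simp
      _ ≤ 2 := by linarith [(div_le_one hx0).2 hx]
  linarith

theorem le_of_monotoneOn_of_succ_le {s : Set ℝ} {f : ℝ → ℝ} (hf : MonotoneOn f s) {u v : ℕ → ℝ}
    {J : ℕ} (hus : ∀ j ≥ J, u j ∈ s) (hvs : ∀ j ≥ J, v j ∈ s)
    (hu : ∀ j ≥ J, u (j + 1) ≤ f (u j)) (hv : ∀ j ≥ J, f (v j) ≤ v (j + 1)) (hJ : u J ≤ v J) :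
    ∀ j ≥ J, u j ≤ v j := by
  intro j hj
  induction j, hj using Nat.le_induction with
  | base => exact hJ
  | succ j hj ih => exact (hu j hj).trans ((hf (hus j hj) (hvs j hj) ih).trans (hv j hj))

lemma eventually_half_le_of_add_one_le {u : ℕ → ℝ} (h0 : ∀ᶠ j in atTop, 0 ≤ u j)
    (h1 : ∀ᶠ j in atTop, u j + 1 ≤ u (j + 1)) : ∀ᶠ j : ℕ in atTop, (j : ℝ) / 2 ≤ u j := by
  obtain ⟨J, hJ⟩ := eventually_atTop.1 (h0.and h1)
  have hlin := le_of_monotoneOn_of_succ_le (f := (· + 1))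
    (monotoneOn_univ.2 fun _ _ h => by simpa using h) (u := fun j => u J + (j - J)) (v := u)
    (J := J) (fun _ _ => trivial) (fun _ _ => trivial) (fun j _ => by push_cast; linarith)
    (fun j hj => (hJ j hj).2) (by simp)
  filter_upwards [eventually_ge_atTop (2 * J)] with j hj
  have : (2 * J : ℝ) ≤ j := by exact_mod_cast hj
  linarith [hlin j (by omega), (hJ J le_rfl).1]

lemma one_le_log_natCast {j : ℕ} (hj : 3 ≤ j) : 1 ≤ log (j : ℝ) := by
  rw [le_log_iff_exp_le (by positivity)]
  have h3 : (3 : ℝ) ≤ j := by exact_mod_cast hj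
  linarith [exp_one_lt_d9]

lemma add_log_add_le_mul_mul_log_add_one {A C x : ℝ} (hA : 2 * |C| + 4 ≤ A) (hx0 : 0 < x)
    (hx : 1 ≤ log x) :
    A * (x * log x) + log (A * (x * log x)) + C ≤ A * ((x + 1) * log (x + 1)) := by
  have hA0 : 0 < A := by linarith [abs_nonneg C]
  have hstep := mul_le_mul_of_nonneg_left (log_le_add_one_mul_log_add_one_sub_mul_log hx0.le)
    hA0.le
  have hgap : log A + log x + log (log x) + C ≤ A * log x := by
    nlinarith [log_le_half_self hA0, log_le_self (by linarith : (0:ℝ) ≤ log x), le_abs_self C,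
      mul_nonneg (by linarith [abs_nonneg C] : (0:ℝ) ≤ A - 2) (by linarith : (0:ℝ) ≤ log x - 1)]
  rw [log_mul hA0.ne' (by positivity), log_mul hx0.ne' (by positivity)]
  linarith

lemma exists_eventually_le_mul_mul_log {u : ℕ → ℝ} (hu : Tendsto u atTop atTop) {C : ℝ}
    (hC : ∀ᶠ j in atTop, u (j + 1) ≤ u j + log (u j) + C) :
    ∃ A, ∀ᶠ j : ℕ in atTop, u j ≤ A * (j * log j) := by
  obtain ⟨J, hJ⟩ := eventually_atTop.1 ((hu.eventually_gt_atTop 0).and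
    (hC.and (eventually_ge_atTop 3)))
  have hpos : ∀ j ≥ J, (0 : ℝ) < j ∧ 1 ≤ log (j : ℝ) := fun j hj =>
    ⟨by have := (hJ j hj).2.2; positivity, one_le_log_natCast (hJ j hj).2.2⟩
  set A := max (u J / (J * log J)) (2 * |C| + 4)
  have hA : 2 * |C| + 4 ≤ A := le_max_right _ _
  have hA0 : 0 < A := by linarith [abs_nonneg C]
  -- `A * (j * log j)` is a supersolution of `x ↦ x + log x + C` dominating `u` at `J`.
  refine ⟨A, eventually_atTop.2 ⟨J, le_of_monotoneOn_of_succ_le (s := Set.Ioi 0)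
    (f := fun x => x + log x + C) ?_ (fun j hj => (hJ j hj).1) ?_ (fun j hj => (hJ j hj).2.1)
    ?_ ?_⟩⟩
  · intro x hx y _ hxy
    linarith [log_le_log hx hxy]
  · intro j hj
    obtain ⟨hj0, hlog⟩ := hpos j hj
    exact mul_pos hA0 (mul_pos hj0 (by linarith))
  · intro j hj
    push_cast
    exact add_log_add_le_mul_mul_log_add_one hA (hpos j hj).1 (hpos j hj).2
  · obtain ⟨hJ0, hlog⟩ := hpos J le_rfl
    exact (div_le_iff₀ (mul_pos hJ0 (by linarith))).1 (le_max_left _ _)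

lemma isEquivalent_log_of_half_le_of_le_mul_mul_log {u : ℕ → ℝ} {A : ℝ}
    (hlow : ∀ᶠ j : ℕ in atTop, (j : ℝ) / 2 ≤ u j)
    (hup : ∀ᶠ j : ℕ in atTop, u j ≤ A * (j * log j)) :
    (fun j => log (u j)) ~[atTop] fun j => log (j : ℝ) := by
  have hlog : Tendsto (fun j : ℕ => log (j : ℝ)) atTop atTop :=
    tendsto_log_atTop.comp tendsto_natCast_atTop_atTop
  have hsmall : (fun j : ℕ => 1 + log (log (j : ℝ))) =o[atTop] fun j => log (j : ℝ) :=
    ((isLittleO_one_left_iff ℝ).2 (tendsto_norm_atTop_atTop.comp hlog)).add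
      (isLittleO_log_id_atTop.comp_tendsto hlog)
  refine IsLittleO.isEquivalent (IsBigO.trans_isLittleO ?_ hsmall)
  refine IsBigO.of_bound (log 2 + |log A| + 1) ?_
  filter_upwards [hlow, hup, eventually_ge_atTop 3] with j hjl hju hj3
  have hlogj := one_le_log_natCast hj3
  have hj0 : (0 : ℝ) < j := by positivity
  have hu0 : 0 < u j := by linarith
  have hA0 : 0 < A := pos_of_mul_pos_left (hu0.trans_le hju) (by positivity)
  have hloglog : 0 ≤ log (log (j : ℝ)) := log_nonneg hlogj
  have hge : log j - log 2 ≤ log (u j) := by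
    rw [← log_div hj0.ne' two_ne_zero]
    exact log_le_log (by positivity) hjl
  have hle : log (u j) ≤ log A + log j + log (log j) := by
    rw [add_assoc, ← log_mul hj0.ne' (by positivity), ← log_mul hA0.ne' (by positivity)]
    exact log_le_log hu0 hju
  rw [Real.norm_eq_abs, Real.norm_eq_abs,
    abs_of_nonneg (by positivity : (0:ℝ) ≤ 1 + log (log j)), Pi.sub_apply, abs_le]
  constructor <;> nlinarith [log_two_gt_d9, abs_nonneg (log A), le_abs_self (log A),
    neg_abs_le (log A)]

theorem isEquivalent_of_sub_isEquivalent_sub {u v : ℕ → ℝ} (hv_mono : Monotone v)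
    (hv_top : Tendsto v atTop atTop)
    (h : (fun j => u (j + 1) - u j) ~[atTop] fun j => v (j + 1) - v j) : u ~[atTop] v := by
  have hsum := h.isLittleO.sum_range (fun j => sub_nonneg.2 (hv_mono j.le_succ))
    ((tendsto_atTop_add_const_right _ (-v 0) hv_top).congr fun n => by
      rw [Finset.sum_range_sub, sub_eq_add_neg])
  simp only [Pi.sub_apply, Finset.sum_range_sub (fun j => v j)] at hsum
  have htel : ∀ n, ∑ j ∈ Finset.range n, (u (j + 1) - u j - (v (j + 1) - v j))
      = (u n - v n) - (u 0 - v 0) := fun n => by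
    rw [← Finset.sum_range_sub (fun j => u j - v j)]
    exact Finset.sum_congr rfl fun j _ => by ring
  have hvinf : Tendsto (norm ∘ v) atTop atTop := tendsto_norm_atTop_atTop.comp hv_top
  have hv0 : (fun n => v n - v 0) =O[atTop] v :=
    (IsLittleO.isEquivalent (u := fun n => v n - v 0) (v := v)
      ((isLittleO_const_left (c := -v 0)).2 (Or.inr hvinf) |>.congr_left fun n => by
        simp)).isBigO
  exact (((hsum.congr_left htel).trans_isBigO hv0).add
    ((isLittleO_const_left (c := u 0 - v 0)).2 (Or.inr hvinf))).congr_left fun n => by simp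

theorem isEquivalent_mul_log_of_abs_sub_log_le {u : ℕ → ℝ} (hu : Tendsto u atTop atTop) {C : ℝ}
    (hC : ∀ᶠ j in atTop, |u (j + 1) - u j - log (u j)| ≤ C) :
    u ~[atTop] fun j => (j : ℝ) * log j := by
  have hlogu : Tendsto (fun j => log (u j)) atTop atTop := tendsto_log_atTop.comp hu
  have hlogj : Tendsto (fun j : ℕ => log (j : ℝ)) atTop atTop :=
    tendsto_log_atTop.comp tendsto_natCast_atTop_atTop
  have hlow := eventually_half_le_of_add_one_le (hu.eventually_ge_atTop 0) (by
    filter_upwards [hC, hlogu.eventually_ge_atTop (C + 1)] with j hj hj'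
    linarith [(abs_le.1 hj).1])
  obtain ⟨A, hup⟩ := exists_eventually_le_mul_mul_log hu (C := C)
    (hC.mono fun j hj => by linarith [(abs_le.1 hj).2])
  have hstep : (fun j => u (j + 1) - u j) ~[atTop] fun j => log (u j) :=
    IsLittleO.isEquivalent <|
      (IsBigO.of_bound C (hC.mono fun j hj => by simpa using hj)).trans_isLittleO
        ((isLittleO_one_left_iff ℝ).2 (tendsto_norm_atTop_atTop.comp hlogu))
  have hincr : (fun j : ℕ => ((j + 1 : ℕ) : ℝ) * log ((j + 1 : ℕ) : ℝ) - j * log j)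
      ~[atTop] fun j => log (j : ℝ) := by
    refine IsLittleO.isEquivalent <| (IsBigO.of_bound 2 ?_).trans_isLittleO
      ((isLittleO_one_left_iff ℝ).2 (tendsto_norm_atTop_atTop.comp hlogj))
    filter_upwards [eventually_ge_atTop 1] with j hj
    have hj' : (1 : ℝ) ≤ j := by exact_mod_cast hj
    rw [Pi.sub_apply, norm_one, mul_one, Real.norm_eq_abs, abs_le]
    push_cast
    constructor <;>
      linarith [log_le_add_one_mul_log_add_one_sub_mul_log (by linarith : (0:ℝ) ≤ j),
        add_one_mul_log_add_one_sub_mul_log_le hj']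
  refine isEquivalent_of_sub_isEquivalent_sub ?_ ?_ (hstep.trans
    ((isEquivalent_log_of_half_le_of_le_mul_mul_log hlow hup).trans hincr.symm))
  · refine monotone_nat_of_le_succ fun j => ?_
    push_cast
    linarith [log_le_add_one_mul_log_add_one_sub_mul_log (Nat.cast_nonneg j : (0:ℝ) ≤ j),
      Real.log_natCast_nonneg j]
  · exact tendsto_natCast_atTop_atTop.atTop_mul_atTop₀ hlogj

lemma abs_log_sub_log_sub_log_log_le {x y A B : ℝ} (hA : 1 ≤ A) (hB : 1 < B) (hBy : B ≤ y)
    (hyx : y ≤ x) (hlow : y * log x ≤ A * x) (hup : x ≤ B * y * log x) :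
    |log x - log y - log (log y)| ≤ log A + log (4 * B) := by
  have hy : 0 < log y := log_pos (hB.trans_le hBy)
  have hx : 0 < log x := hy.trans_le (log_le_log (by linarith) hyx)
  have hB0 : 0 < B := by linarith
  have hy0 : 0 < y := by linarith
  have hup' : log x ≤ log B + log y + log (log x) := by
    have := log_le_log (by linarith) hup
    rwa [log_mul (by positivity) hx.ne', log_mul hB0.ne' hy0.ne'] at this
  have hlow' : log y + log (log x) ≤ log A + log x := by
    have := log_le_log (by positivity) hlow
    rwa [log_mul hy0.ne' hx.ne', log_mul (by linarith) (by linarith)] at this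
  have hlogx : log x ≤ 4 * log y := by
    linarith [log_le_half_self hx, log_le_log hB0 hBy]
  have hloglog_le : log (log x) ≤ log 4 + log (log y) := by
    rw [← log_mul (by norm_num) hy.ne']
    exact log_le_log hx hlogx
  have hloglog_ge : log (log y) ≤ log (log x) := log_le_log hy (log_le_log (by linarith) hyx)
  rw [log_mul (by norm_num) hB0.ne', abs_le]
  constructor <;>
    linarith [log_nonneg hA, log_nonneg hB.le, log_nonneg (show (1:ℝ) ≤ 4 by norm_num)]

lemma lt_pseq (M : ℕ) : M < pseq M := by
  have := Nat.add_two_le_nth_prime (M - 1)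
  unfold pseq
  omega

lemma primeCounting_pseq {M : ℕ} (hM : 1 ≤ M) : π (pseq M) = M := by
  rw [pseq, Nat.primeCounting, Nat.primeCounting',
    Nat.count_nth_succ_of_infinite Nat.infinite_setOfPred_prime]
  omega

lemma pseq_le_mul_log {M : ℕ} (hM : 1 ≤ M) : (pseq M : ℝ) ≤ 6 * M * log (pseq M) := by
  set x := pseq M
  have hx : (2 : ℝ) ≤ x := by exact_mod_cast (show 2 ≤ x by have := lt_pseq M; omega)
  have hlogx : 0 < log x := log_pos (by linarith)
  have hcheb := Chebyshev.pi_ge x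
  rw [primeCounting_pseq hM, div_le_iff₀ hlogx] at hcheb
  have hlog_succ : log (x + 1) ≤ 2 * log x := by
    calc log (x + 1) ≤ log ((x : ℝ) ^ 2) := log_le_log (by linarith) (by nlinarith)
      _ = 2 * log x := by rw [log_pow]; norm_num
  have hM' : (1 : ℝ) ≤ M := by exact_mod_cast hM
  nlinarith [log_two_gt_d9]

lemma mul_log_pseq_le {M : ℕ} (hM : 1 ≤ M) : (M : ℝ) * log (pseq M) ≤ 5 * pseq M := by
  set x := pseq M
  have hx : (1 : ℝ) < x := by exact_mod_cast (show 1 < x by have := lt_pseq M; omega)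
  have hcheb := Chebyshev.pi_le_log4_mul_div hx
  rw [Nat.floor_natCast, primeCounting_pseq hM, log_sqrt (by linarith)] at hcheb
  have hlogx : 0 < log x := log_pos hx
  have hsqrt : √x * log x ≤ 2 * x := by
    have h := log_le_sub_one_of_pos (sqrt_pos.2 (by linarith : (0:ℝ) < x))
    rw [log_sqrt (by linarith)] at h
    nlinarith [sq_sqrt (by linarith : (0:ℝ) ≤ x), sqrt_nonneg x]
  have hlog4 : log 4 < 3 / 2 := by
    rw [show (4:ℝ) = 2 ^ 2 by norm_num, log_pow]
    linarith [log_two_lt_d9]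
  have : (M : ℝ) * log x ≤ 2 * log 4 * x + √x * log x := by
    have h := mul_le_mul_of_nonneg_right hcheb hlogx.le
    have h4 : log 4 * x / (log x / 2) * log x = 2 * log 4 * x := by field_simp
    rwa [add_mul, h4] at h
  nlinarith

lemma abs_log_pseq_sub_log_sub_log_log_le {M : ℕ} (hM : 6 ≤ M) :
    |log (pseq M) - log M - log (log M)| ≤ log 5 + log 24 :=
  (abs_log_sub_log_sub_log_log_le (by norm_num) (by norm_num) (by exact_mod_cast hM)
    (by exact_mod_cast (lt_pseq M).le) (mul_log_pseq_le (by omega))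
    (pseq_le_mul_log (by omega))).trans_eq (by norm_num)

lemma pk_succ (j n : ℕ) : pk (j + 1) n = pseq (pk j n) :=
  Function.iterate_succ_apply' pseq j n

lemma add_le_pk (j n : ℕ) : n + j ≤ pk j n := by
  induction j with
  | zero => rfl
  | succ j ih => rw [pk_succ]; have := lt_pseq (pk j n); omega

theorem iterated_prime_column_log_asymptotic_general (n : ℕ) :
    Tendsto (fun j : ℕ => Real.log (pk j n) / ((j : ℝ) * Real.log j)) atTop (𝓝 1) := by
  have hpk : Tendsto (fun j => pk j n) atTop atTop :=
    tendsto_atTop_mono (fun j => (Nat.le_add_left j n).trans (add_le_pk j n)) tendsto_id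
  have hequiv := isEquivalent_mul_log_of_abs_sub_log_le
    (tendsto_log_atTop.comp (tendsto_natCast_atTop_atTop.comp hpk)) (C := log 5 + log 24) (by
      filter_upwards [hpk.eventually_ge_atTop 6] with j hj
      simpa only [Function.comp, pk_succ] using abs_log_pseq_sub_log_sub_log_log_le hj)
  refine (isEquivalent_iff_tendsto_one ?_).1 hequiv
  filter_upwards [eventually_ge_atTop 3] with j hj
  exact (mul_pos (by positivity) (by linarith [one_le_log_natCast hj])).ne'

theorem iterated_prime_column_log_asymptotic (n : ℕ) (hn : 1 ≤ n) :
    Tendsto (fun j : ℕ => Real.log (pk j n) / ((j : ℝ) * Real.log j)) atTop (𝓝 1) :=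
  iterated_prime_column_log_asymptotic_general n
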